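/- arXiv:1806.09600 — 3 statements merged into one kernel-verified Lean document; each statement's English description precedes it below -/
import Mathlib

section
/- Let n be a nonnegative integer. Then v_p(B_n) ≥ -1 for every prime p, where B_n is the n-th Bernoulli number and v_p is the p-adic valuation. -/
/-!
Faulhaber's formula for `∑_{k < p} k ^ n` isolates `p * B_n` as an integer minus the terms
`B_i * (n choose i) * p ^ (n + 1 - i) / (n + 1 - i)` with `i < n`. Since `v_p(m) < m`, every
`p ^ m / m` has `p`-adic norm at most `1 / p`, so by strong induction on `n` (with the
bound `|B_i|_p ≤ p` for `i < n`) each of these terms is `p`-integral, and hence so is `p * B_n`.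
-/

open Finset

namespace padicNorm

variable {p : ℕ} [Fact p.Prime]

theorem le_zpow_iff {q : ℚ} (hq : q ≠ 0) (k : ℤ) :
    padicNorm p q ≤ (p : ℚ) ^ (-k) ↔ k ≤ padicValRat p q := by
  rw [padicNorm.eq_zpow_of_nonzero hq,
    zpow_le_zpow_iff_right₀ (Nat.one_lt_cast.2 (Fact.out : p.Prime).one_lt), neg_le_neg_iff]

theorem prime_pow_div_le {m : ℕ} (hm : 0 < m) :
    padicNorm p ((p : ℚ) ^ m / m) ≤ (p : ℚ)⁻¹ := by
  have hp : p.Prime := Fact.out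
  have hm₀ : (m : ℚ) ≠ 0 := Nat.cast_ne_zero.2 hm.ne'
  have hp₀ : (p : ℚ) ≠ 0 := Nat.cast_ne_zero.2 hp.ne_zero
  rw [← zpow_neg_one, le_zpow_iff (div_ne_zero (pow_ne_zero m hp₀) hm₀),
    padicValRat.div (pow_ne_zero m hp₀) hm₀, padicValRat.pow _, padicValRat.self hp.one_lt,
    padicValRat.of_nat]
  have hval_le_log := padicValNat_le_nat_log (p := p) m
  have hlog_lt := Nat.log_lt_self p hm.ne'
  omega

end padicNorm

theorem mul_choose_succ_mul_div_eq (b y : ℚ) {n i : ℕ} (hi : i ≤ n) :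
    b * (n + 1).choose i * y / (n + 1) = b * n.choose i * (y / (n + 1 - i : ℕ)) := by
  have hchoose : ((n.choose i * (n + 1) : ℕ) : ℚ) = ((n + 1).choose i * (n + 1 - i) : ℕ) :=
    congrArg _ (Nat.choose_mul_succ_eq n i)
  have hi' : ((n + 1 - i : ℕ) : ℚ) ≠ 0 := Nat.cast_ne_zero.2 (by omega)
  push_cast at hchoose ⊢
  field_simp
  linear_combination (-b * y) * hchoose

theorem bernoulli_mul_eq_sum_pow_sub (n m : ℕ) :
    bernoulli n * m = ∑ k ∈ range m, (k : ℚ) ^ n -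
      ∑ i ∈ range n, bernoulli i * n.choose i * ((m : ℚ) ^ (n + 1 - i) / (n + 1 - i : ℕ)) := by
  rw [sum_range_pow, sum_range_succ, Nat.choose_succ_self_right, Nat.add_sub_cancel_left,
    pow_one, sum_congr rfl fun i hi =>
      mul_choose_succ_mul_div_eq _ _ (mem_range.1 hi).le]
  push_cast
  field_simp
  ring

theorem padicNorm_bernoulli_le (p : ℕ) [Fact p.Prime] (n : ℕ) :
    padicNorm p (bernoulli n) ≤ p := by
  induction n using Nat.strong_induction_on with
  | _ n ih =>
    have hp₀ : (0 : ℚ) < p := by exact_mod_cast (Fact.out : p.Prime).pos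
    have hterm : ∀ i ∈ range n,
        padicNorm p (bernoulli i * n.choose i * ((p : ℚ) ^ (n + 1 - i) / (n + 1 - i : ℕ))) ≤ 1 := by
      intro i hi
      have hi := mem_range.1 hi
      rw [padicNorm.mul, padicNorm.mul]
      calc _ ≤ p * 1 * (p : ℚ)⁻¹ :=
            mul_le_mul (mul_le_mul (ih i hi) (padicNorm.of_nat _) (padicNorm.nonneg _) hp₀.le)
              (padicNorm.prime_pow_div_le (m := n + 1 - i) (by omega))
              (padicNorm.nonneg _) (by positivity)
        _ = 1 := by field_simp
    have hp_mul : padicNorm p (bernoulli n * p) ≤ 1 := by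
      rw [bernoulli_mul_eq_sum_pow_sub]
      refine padicNorm.sub.trans (max_le ?_ (padicNorm.sum_le' hterm zero_le_one))
      exact_mod_cast padicNorm.of_nat (∑ k ∈ range p, k ^ n)
    rwa [padicNorm.mul, padicNorm.padicNorm_p_of_prime,
      mul_inv_le_iff₀ hp₀, one_mul] at hp_mul

/-- Von Staudt–Clausen consequence: `v_p(B_n) ≥ -1` for every prime `p`. -/
theorem bernoulli_padic_valuation (p n : ℕ) (hp : p.Prime) :
    (-1 : ℤ) ≤ padicValRat p (bernoulli n) := by
  have := Fact.mk hp
  by_cases h0 : bernoulli n = 0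
  · simp [h0]
  · exact (padicNorm.le_zpow_iff h0 (-1)).1 (by simpa using padicNorm_bernoulli_le p n)
end

section
/- Let r ≥ 1. For every triple J = (P_1, P_2, P_3) of pairwise disjoint sets with P_1 ∪ P_2 ∪ P_3 = {1,...,r}, and every prime p and integer M ≥ 1, define U_{r,p^M,J} = {(u_1,...,u_r) ∈ [0, r·p^{M-1} - 1]^r : u_{i-1} = u_i if i ∈ P_1; u_{i-1} < u_i < u_{i-1} + p^{M-1} if i ∈ P_2; u_i = u_{i-1} + p^{M-1} if i ∈ P_3} (with u_0 = 0), and T_{r,J} = {(t_1,...,t_r) ∈ [1, p-1]^r : t_{i-1} ≤ t_i if i ∈ P_1; t_{i-1} > t_i if i ∈ P_3} (with t_0 = 0). Then the map div sending (x_1,...,x_r) to ((u_1,...,u_r),(t_1,...,t_r)) given by the Euclidean divisions x_1+...+x_i = u_i·p + t_i restricts to a bijection from D_{r,p^M} = {(x_i) ∈ [0,p^M-1]^r : p ∤ x_1+...+x_i for all i} onto the disjoint union over all such J of U_{r,p^M,J} × T_{r,J}. -/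
/-- `u_{i-1}` with the convention `u_0 = 0`. -/
def prevOr0 {r : ℕ} (u : Fin r → ℕ) (i : Fin r) : ℕ :=
  if h : 0 < (i : ℕ) then u ⟨(i : ℕ) - 1, lt_of_le_of_lt (Nat.sub_le _ _) i.isLt⟩ else 0

/-- The condition defining `U_{r,p^M,J}` for an ordered partition `π : Fin r → Fin 3`
(`π i = 0, 1, 2` meaning `i ∈ P_1, P_2, P_3` respectively). -/
def UCond (p M r : ℕ) (π : Fin r → Fin 3) (u : Fin r → ℕ) : Prop :=
  ∀ i : Fin r, u i ≤ r * p ^ (M - 1) - 1 ∧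
    (π i = 0 → prevOr0 u i = u i) ∧
    (π i = 1 → prevOr0 u i < u i ∧ u i < prevOr0 u i + p ^ (M - 1)) ∧
    (π i = 2 → u i = prevOr0 u i + p ^ (M - 1))

/-- The condition defining `T_{r,J}` for an ordered partition `π : Fin r → Fin 3`. -/
def TCond (p r : ℕ) (π : Fin r → Fin 3) (t : Fin r → ℕ) : Prop :=
  ∀ i : Fin r, (1 ≤ t i ∧ t i ≤ p - 1) ∧
    (π i = 0 → prevOr0 t i ≤ t i) ∧
    (π i = 2 → t i < prevOr0 t i)

/-- The map `div` of the paper, together with the classifier recording to which part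
`P_1, P_2, P_3` each index belongs: `x ↦ (J, (u_i), (t_i))` where
`x_1+⋯+x_i = u_i·p + t_i`. -/
def divMap (p M r : ℕ) (x : Fin r → ℕ) :
    (Fin r → Fin 3) × ((Fin r → ℕ) × (Fin r → ℕ)) :=
  let u : Fin r → ℕ := fun i => (∑ j ∈ Finset.Iic i, x j) / p
  let t : Fin r → ℕ := fun i => (∑ j ∈ Finset.Iic i, x j) % p
  (fun i => if prevOr0 u i = u i then 0
    else if u i = prevOr0 u i + p ^ (M - 1) then 2 else 1, u, t)

/-!
Writing `S_i = x_1 + ⋯ + x_i`, the map `x ↦ S` identifies `D_{r,p^M}` with the sequences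
`0 = S_0 ≤ S_1 ≤ ⋯ ≤ S_r` whose increments are `< p^M` and none of whose terms is divisible by
`p`. With `S_i = u_i p + t_i`, `0 < t_i < p`, comparing `u_{i-1} p + t_{i-1}` and `u_i p + t_i`
lexicographically shows that `0 ≤ S_i - S_{i-1} < p^{M-1} p` holds exactly when one of the three
alternatives defining `P_1, P_2, P_3` holds at `i`, and `div` records which one.
-/

section PrevOr0

variable {r : ℕ}

lemma prevOr0_comp {f : ℕ → ℕ} (hf : f 0 = 0) (u : Fin r → ℕ) (i : Fin r) :
    prevOr0 (f ∘ u) i = f (prevOr0 u i) := by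
  unfold prevOr0; split <;> simp [hf]

lemma prevOr0_mul_add (u t : Fin r → ℕ) (p : ℕ) (i : Fin r) :
    prevOr0 (fun j => u j * p + t j) i = prevOr0 u i * p + prevOr0 t i := by
  unfold prevOr0; split <;> simp

lemma prevOr0_lt {u : Fin r → ℕ} {c : ℕ} (hc : 0 < c) (hu : ∀ j, u j < c) (i : Fin r) :
    prevOr0 u i < c := by
  unfold prevOr0; split
  · exact hu _
  · exact hc

lemma eq_of_eq_prevOr0_add {A B x : Fin r → ℕ} (hA : ∀ i, A i = prevOr0 A i + x i)
    (hB : ∀ i, B i = prevOr0 B i + x i) : A = B := by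
  funext ⟨n, hn⟩
  induction n with
  | zero => rw [hA, hB]; simp [prevOr0]
  | succ n ih =>
    rw [hA, hB]
    simp only [prevOr0, Nat.add_sub_cancel, dif_pos n.succ_pos]
    rw [ih (by omega)]

end PrevOr0

section PartialSum

variable {r : ℕ}

def partialSum (x : Fin r → ℕ) : Fin r → ℕ := fun i => ∑ j ∈ Finset.Iic i, x j

lemma partialSum_eq_prevOr0_add (x : Fin r → ℕ) (i : Fin r) :
    partialSum x i = prevOr0 (partialSum x) i + x i := by
  unfold partialSum prevOr0
  split
  next h =>
    have hIic : Finset.Iic i = insert i (Finset.Iic ⟨(i : ℕ) - 1, by omega⟩) := by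
      ext j
      simp only [Finset.mem_Iic, Finset.mem_insert, Fin.le_def, Fin.ext_iff]
      omega
    rw [hIic, Finset.sum_insert (by simp [Fin.le_def]; omega), add_comm]
  next h =>
    have hIic : Finset.Iic i = {i} := by
      ext j
      simp only [Finset.mem_Iic, Finset.mem_singleton, Fin.le_def, Fin.ext_iff]
      omega
    simp [hIic]

lemma partialSum_injective : Function.Injective (partialSum (r := r)) := by
  intro x y h
  funext i
  have hx := partialSum_eq_prevOr0_add x i
  have hy := partialSum_eq_prevOr0_add y i
  rw [h] at hx
  omega

lemma partialSum_sub_prevOr0 {S : Fin r → ℕ} (hS : ∀ i, prevOr0 S i ≤ S i) :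
    partialSum (fun i => S i - prevOr0 S i) = S :=
  eq_of_eq_prevOr0_add (partialSum_eq_prevOr0_add _) fun i => by have := hS i; omega

lemma partialSum_lt {x : Fin r → ℕ} {c : ℕ} (hx : ∀ i, x i < c) (i : Fin r) :
    partialSum x i < (i + 1) * c := by
  calc partialSum x i < ∑ _j ∈ Finset.Iic i, c :=
        Finset.sum_lt_sum_of_nonempty ⟨i, Finset.mem_Iic.2 le_rfl⟩ fun j _ => hx j
    _ = (i + 1) * c := by simp

def boundedIncrements (c : ℕ) : Set (Fin r → ℕ) :=
  {S | ∀ i, prevOr0 S i ≤ S i ∧ S i < prevOr0 S i + c}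

lemma bijOn_partialSum (c : ℕ) :
    Set.BijOn partialSum {x : Fin r → ℕ | ∀ i, x i < c} (boundedIncrements c) := by
  refine ⟨fun x hx i => ?_, partialSum_injective.injOn, fun S hS => ?_⟩
  · have := partialSum_eq_prevOr0_add x i
    have := hx i
    constructor <;> omega
  · refine ⟨fun i => S i - prevOr0 S i, fun i => ?_, partialSum_sub_prevOr0 fun i => (hS i).1⟩
    have := hS i
    simp only
    omega

lemma lt_mul_of_mem_boundedIncrements {c : ℕ} {S : Fin r → ℕ} (hS : S ∈ boundedIncrements c)
    (i : Fin r) : S i < r * c := by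
  obtain ⟨x, hx, rfl⟩ := (bijOn_partialSum c).surjOn hS
  calc partialSum x i < (i + 1) * c := partialSum_lt hx i
    _ ≤ r * c := Nat.mul_le_mul_right c i.isLt

end PartialSum

section MulAdd

variable {p u u' t t' : ℕ}

lemma mul_add_lt_mul_add_iff (ht : t < p) (ht' : t' < p) :
    u * p + t < u' * p + t' ↔ u < u' ∨ u = u' ∧ t < t' := by
  constructor
  · intro h
    rcases lt_trichotomy u u' with hu | rfl | hu
    · exact .inl hu
    · exact .inr ⟨rfl, by omega⟩
    · nlinarith
  · rintro (hu | ⟨rfl, ht⟩)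
    · nlinarith
    · omega

lemma mul_add_le_and_lt_add_mul_iff {q : ℕ} (hq : 0 < q) (ht : t < p) (ht' : t' < p) :
    (u' * p + t' ≤ u * p + t ∧ u * p + t < u' * p + t' + q * p) ↔
      (u' = u ∧ t' ≤ t) ∨ (u' < u ∧ u < u' + q) ∨ (u = u' + q ∧ t < t') := by
  rw [← not_lt, show u' * p + t' + q * p = (u' + q) * p + t' by ring,
    mul_add_lt_mul_add_iff ht ht', mul_add_lt_mul_add_iff ht ht']
  omega

end MulAdd

section DivOfSums

variable {p M r : ℕ}

def divOfSums (p M r : ℕ) (S : Fin r → ℕ) : (Fin r → Fin 3) × ((Fin r → ℕ) × (Fin r → ℕ)) :=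
  let u : Fin r → ℕ := fun i => S i / p
  let t : Fin r → ℕ := fun i => S i % p
  (fun i => if prevOr0 u i = u i then 0
    else if u i = prevOr0 u i + p ^ (M - 1) then 2 else 1, u, t)

lemma divMap_eq_divOfSums_comp : divMap p M r = divOfSums p M r ∘ partialSum := rfl

lemma divOfSums_injective : Function.Injective (divOfSums p M r) := by
  intro S S' h
  simp only [divOfSums, Prod.mk.injEq, funext_iff] at h
  funext i
  rw [← Nat.div_add_mod' (S i) p, ← Nat.div_add_mod' (S' i) p, h.2.1 i, h.2.2 i]

lemma mapsTo_divOfSums (hp : 0 < p) (hM : 0 < M) :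
    Set.MapsTo (divOfSums p M r) (boundedIncrements (p ^ M) ∩ {S | ∀ i, ¬ p ∣ S i})
      {z | UCond p M r z.1 z.2.1 ∧ TCond p r z.1 z.2.2} := by
  rintro S ⟨hS, hndvd⟩
  have hq : 0 < p ^ (M - 1) := pow_pos hp _
  have hqp : p ^ (M - 1) * p = p ^ M := pow_sub_one_mul hM.ne' p
  have hstep : ∀ i, (prevOr0 S i / p = S i / p ∧ prevOr0 S i % p ≤ S i % p) ∨
      (prevOr0 S i / p < S i / p ∧ S i / p < prevOr0 S i / p + p ^ (M - 1)) ∨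
      (S i / p = prevOr0 S i / p + p ^ (M - 1) ∧ S i % p < prevOr0 S i % p) := fun i =>
    (mul_add_le_and_lt_add_mul_iff hq (Nat.mod_lt _ hp) (Nat.mod_lt _ hp)).1 <| by
      rw [Nat.div_add_mod', Nat.div_add_mod', hqp]; exact hS i
  have hbound : ∀ i, S i / p ≤ r * p ^ (M - 1) - 1 := fun i => by
    have := lt_mul_of_mem_boundedIncrements hS i
    rw [← hqp, ← mul_assoc, ← Nat.div_lt_iff_lt_mul hp] at this
    omega
  have hmod : ∀ i, 1 ≤ S i % p ∧ S i % p ≤ p - 1 := fun i => by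
    have := Nat.mod_lt (S i) hp
    have := mt Nat.dvd_of_mod_eq_zero (hndvd i)
    omega
  have hu := prevOr0_comp (f := (· / p)) (Nat.zero_div p) S
  have ht := prevOr0_comp (f := (· % p)) (Nat.zero_mod p) S
  simp only [Function.comp_def] at hu ht
  refine ⟨fun i => ⟨hbound i, ?_⟩, fun i => ⟨hmod i, ?_⟩⟩ <;>
    simp only [divOfSums, hu, ht] <;> have := hstep i <;> split_ifs <;> omega

lemma surjOn_divOfSums (hp : 0 < p) (hM : 0 < M) :
    Set.SurjOn (divOfSums p M r) (boundedIncrements (p ^ M) ∩ {S | ∀ i, ¬ p ∣ S i})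
      {z | UCond p M r z.1 z.2.1 ∧ TCond p r z.1 z.2.2} := by
  rintro ⟨π, u, t⟩ ⟨hU, hT⟩
  dsimp only at hU hT
  have hq : 0 < p ^ (M - 1) := pow_pos hp _
  have htp : ∀ i, t i < p := fun i => by have := (hT i).1; omega
  have hdiv : ∀ i, (u i * p + t i) / p = u i := fun i => by
    rw [mul_comm, Nat.mul_add_div hp, Nat.div_eq_of_lt (htp i), add_zero]
  have hmod : ∀ i, (u i * p + t i) % p = t i := fun i => by
    rw [mul_comm, Nat.mul_add_mod, Nat.mod_eq_of_lt (htp i)]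
  refine ⟨fun i => u i * p + t i, ⟨fun i => ?_, fun i => ?_⟩, ?_⟩
  · rw [prevOr0_mul_add, ← pow_sub_one_mul hM.ne' p]
    refine (mul_add_le_and_lt_add_mul_iff hq (htp i) (prevOr0_lt hp htp i)).2 ?_
    have := hU i
    have := hT i
    obtain hπ | hπ | hπ : π i = 0 ∨ π i = 1 ∨ π i = 2 := by omega
    all_goals simp_all
  · rw [Nat.dvd_iff_mod_eq_zero, hmod]
    have := (hT i).1
    omega
  · simp only [divOfSums, hdiv, hmod]
    refine Prod.ext (funext fun i => ?_) rfl
    change (if prevOr0 u i = u i then (0 : Fin 3)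
      else if u i = prevOr0 u i + p ^ (M - 1) then 2 else 1) = π i
    obtain ⟨-, h0, h1, h2⟩ := hU i
    obtain hπ | hπ | hπ : π i = 0 ∨ π i = 1 ∨ π i = 2 := by omega
    · rw [if_pos (h0 hπ), hπ]
    · have := h1 hπ
      rw [if_neg (by omega), if_neg (by omega), hπ]
    · rw [if_neg (by have := h2 hπ; omega), if_pos (h2 hπ), hπ]

lemma bijOn_divOfSums (hp : 0 < p) (hM : 0 < M) :
    Set.BijOn (divOfSums p M r) (boundedIncrements (p ^ M) ∩ {S | ∀ i, ¬ p ∣ S i})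
      {z | UCond p M r z.1 z.2.1 ∧ TCond p r z.1 z.2.2} :=
  ⟨mapsTo_divOfSums hp hM, divOfSums_injective.injOn, surjOn_divOfSums hp hM⟩

end DivOfSums

theorem divMap_bijOn_general (p M r : ℕ) (hp : p.Prime) (hM : 0 < M) :
    Set.BijOn (divMap p M r)
      {x : Fin r → ℕ | (∀ i, x i ≤ p ^ M - 1) ∧
        ∀ i : Fin r, ¬ p ∣ ∑ j ∈ Finset.Iic i, x j}
      {z : (Fin r → Fin 3) × ((Fin r → ℕ) × (Fin r → ℕ)) |
        UCond p M r z.1 z.2.1 ∧ TCond p r z.1 z.2.2} := by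
  have hp0 := hp.pos
  have hdom : {x : Fin r → ℕ | (∀ i, x i ≤ p ^ M - 1) ∧
      ∀ i : Fin r, ¬ p ∣ ∑ j ∈ Finset.Iic i, x j} =
      {x | ∀ i, x i < p ^ M} ∩ partialSum ⁻¹' {S | ∀ i, ¬ p ∣ S i} := by
    ext x
    simp only [Set.mem_ofPred_eq, Set.mem_inter_iff, Set.mem_preimage, partialSum,
      Nat.le_sub_one_iff_lt (pow_pos hp0 M)]
  rw [divMap_eq_divOfSums_comp, hdom]
  exact (bijOn_divOfSums hp0 hM).comp
    ((bijOn_partialSum _).inter_mapsTo (Set.mapsTo_preimage _ _) Set.inter_subset_right)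

/-- Lemma 2.2 of the paper: `div` restricts to a bijection from
`D_{r,p^M} = {x ∈ [0,p^M-1]^r : p ∤ x_1+⋯+x_i}` onto the disjoint union, over ordered
partitions `J = (P_1,P_2,P_3)` of `{1,…,r}`, of `U_{r,p^M,J} × T_{r,J}`. -/
theorem divMap_bijOn (p M r : ℕ) (hp : p.Prime) (hM : 0 < M) (hr : 0 < r) :
    Set.BijOn (divMap p M r)
      {x : Fin r → ℕ | (∀ i, x i ≤ p ^ M - 1) ∧
        ∀ i : Fin r, ¬ p ∣ ∑ j ∈ Finset.Iic i, x j}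
      {z : (Fin r → Fin 3) × ((Fin r → ℕ) × (Fin r → ℕ)) |
        UCond p M r z.1 z.2.1 ∧ TCond p r z.1 z.2.2} :=
  divMap_bijOn_general p M r hp hM
end

section
/- In the base case r = 1 with ε_1 ≠ 1: for any nonnegative integer l and any c-th root of unity ε_1 ≠ 1 (c prime to p), the coefficients B_{l',ξ} in the expansion Σ_{u=0}^{h-1} ε_1^{-u} u^l = Σ_{l',ξ} B_{l',ξ} h^{l'} ξ^h all lie in ℤ[ε_1, ε_1^{-1}, (ε_1-1)^{-1}], and hence have p-adic valuation ≥ 0 for any prime p not dividing c. -/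
/-!
Put `x = ε⁻¹`. The twisted power sum `∑_{u<h} x^u u^l` equals `Q(h) x^h - Q(0)` for the
polynomial `Q` of degree `≤ l` solving `x Q(t+1) - Q(t) = t^l`. Solving this equation degree by
degree with the binomial theorem only ever divides by `x - 1`, so the coefficients of `Q` lie in
`ℤ[x, (x-1)⁻¹] = ℤ[ε, ε⁻¹, (ε-1)⁻¹]`; the coefficients `B_{l',ξ}` are these
(for `ξ = x`), `-Q(0)` (for `ξ = 1`, `l' = 0`) and `0`.

For the valuation bound, the closed unit ball of a nonarchimedean absolute value is a subring
and contains all roots of unity. If `ε` has order `n > 1` prime to `p`, then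
`∏_{k=1}^{n-1} (1 - ε^k) = n` has absolute value `1`; every factor has absolute value `≤ 1`,
hence `|1 - ε| = 1` and `(ε - 1)⁻¹` lies in the unit ball too.
-/

open Polynomial Finset

/-- The formula is the equation `x Q_l(t+1) - Q_l(t) = t^l` solved for `Q_l`, after expanding
`(t+1)^l` binomially and using the equations for `j < l`. -/
noncomputable def twistedPowerSumPoly {K : Type*} [Field K] (x : K) : ℕ → K[X]
  | l => C (x - 1)⁻¹ *
      (X ^ l - C x * ∑ j : Fin l, C (l.choose j : K) * twistedPowerSumPoly x j)

section TwistedPowerSumPoly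

variable {K : Type*} [Field K] {x : K}

theorem twistedPowerSumPoly_eq (x : K) (l : ℕ) :
    twistedPowerSumPoly x l = C (x - 1)⁻¹ *
      (X ^ l - C x * ∑ j ∈ range l, C (l.choose j : K) * twistedPowerSumPoly x j) := by
  rw [twistedPowerSumPoly,
    Fin.sum_univ_eq_sum_range (fun j => C (l.choose j : K) * twistedPowerSumPoly x j)]

theorem natDegree_twistedPowerSumPoly_le (x : K) (l : ℕ) :
    (twistedPowerSumPoly x l).natDegree ≤ l := by
  induction l using Nat.strong_induction_on with
  | _ l ih =>
    rw [twistedPowerSumPoly_eq]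
    refine natDegree_C_mul_le _ _ |>.trans <| natDegree_sub_le _ _ |>.trans <|
      max_le (natDegree_X_pow_le l) <| natDegree_C_mul_le _ _ |>.trans <|
      natDegree_sum_le_of_forall_le _ _ fun j hj => ?_
    exact (natDegree_C_mul_le _ _).trans ((ih j (mem_range.mp hj)).trans (mem_range.mp hj).le)

theorem coeff_twistedPowerSumPoly_mem (R : Subring K) (hx : x ∈ R) (hx' : (x - 1)⁻¹ ∈ R)
    (l i : ℕ) : (twistedPowerSumPoly x l).coeff i ∈ R := by
  induction l using Nat.strong_induction_on generalizing i with
  | _ l ih =>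
    rw [twistedPowerSumPoly_eq, coeff_C_mul, coeff_sub, coeff_C_mul, finsetSum_coeff]
    refine R.mul_mem hx' (R.sub_mem ?_ (R.mul_mem hx (R.sum_mem fun j hj => ?_)))
    · rw [coeff_X_pow]
      split_ifs
      exacts [R.one_mem, R.zero_mem]
    · rw [coeff_C_mul]
      exact R.mul_mem (natCast_mem R _) (ih j (mem_range.mp hj) i)

theorem mul_eval_add_one_sub_eval_twistedPowerSumPoly (hx : x ≠ 1) (l : ℕ) (t : K) :
    x * (twistedPowerSumPoly x l).eval (t + 1) - (twistedPowerSumPoly x l).eval t = t ^ l := by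
  induction l using Nat.strong_induction_on generalizing t with
  | _ l ih =>
    simp only [twistedPowerSumPoly_eq x l, eval_mul, eval_C, eval_sub, eval_pow, eval_X,
      eval_finsetSum]
    have h_lower : x * ∑ j ∈ range l, (l.choose j : K) * (twistedPowerSumPoly x j).eval (t + 1)
        - ∑ j ∈ range l, (l.choose j : K) * (twistedPowerSumPoly x j).eval t
        = ∑ j ∈ range l, (l.choose j : K) * t ^ j := by
      rw [mul_sum, ← sum_sub_distrib]
      refine sum_congr rfl fun j hj => ?_
      rw [← ih j (mem_range.mp hj) t]
      ring
    have h_binom : (t + 1) ^ l = t ^ l + ∑ j ∈ range l, (l.choose j : K) * t ^ j := by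
      rw [add_pow, sum_range_succ]
      simp only [Nat.choose_self, Nat.cast_one, one_pow, one_mul, mul_comm (t ^ _)]
      ring
    have h_inv : (x - 1) * (x - 1)⁻¹ = 1 := mul_inv_cancel₀ (sub_ne_zero.mpr hx)
    linear_combination (-(x - 1)⁻¹ * x) * h_lower + ((x - 1)⁻¹ * x) * h_binom + t ^ l * h_inv

theorem sum_range_pow_mul_pow_eq (hx : x ≠ 1) (l h : ℕ) :
    ∑ u ∈ range h, x ^ u * (u : K) ^ l =
      (twistedPowerSumPoly x l).eval (h : K) * x ^ h - (twistedPowerSumPoly x l).eval 0 := by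
  induction h with
  | zero => simp
  | succ h ih =>
    rw [sum_range_succ, ih]
    push_cast
    linear_combination (-x ^ h) * mul_eval_add_one_sub_eval_twistedPowerSumPoly hx l (h : K)

end TwistedPowerSumPoly

namespace Polynomial

variable {K : Type*} [Field K] [DecidableEq K]

/-- The coefficient `B_{l',ξ}` of `t ^ l' * ξ ^ n` in `Q(t) x ^ n - Q(0)`. -/
def expansionCoeff (Q : K[X]) (x : K) (l' : ℕ) (ξ : K) : K :=
  (if ξ = x then Q.coeff l' else 0) - if l' = 0 ∧ ξ = 1 then Q.coeff 0 else 0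

theorem expansionCoeff_mem {R : Subring K} {Q : K[X]} (hQ : ∀ i, Q.coeff i ∈ R) (x : K)
    (l' : ℕ) (ξ : K) : Q.expansionCoeff x l' ξ ∈ R := by
  unfold expansionCoeff
  refine R.sub_mem ?_ ?_ <;> split_ifs
  exacts [hQ l', R.zero_mem, hQ 0, R.zero_mem]

theorem eval_mul_pow_sub_eval_zero_eq_sum_expansionCoeff {Q : K[X]} {N : ℕ}
    (hQ : Q.natDegree < N) {x : K} {S : Finset K} (hx : x ∈ S) (h1 : 1 ∈ S) (t : K) (n : ℕ) :
    Q.eval t * x ^ n - Q.eval 0 =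
      ∑ l' ∈ range N, ∑ ξ ∈ S, Q.expansionCoeff x l' ξ * t ^ l' * ξ ^ n := by
  have hN : N ≠ 0 := by omega
  simp [expansionCoeff, sub_mul, ite_mul, sum_ite_eq', hx, h1, eval_eq_sum_range' hQ, sum_mul,
    coeff_zero_eq_eval_zero, ite_and, hN]

end Polynomial

namespace AbsoluteValue

variable {K : Type*} [Field K]

def integer (v : AbsoluteValue K ℝ) (hna : IsNonarchimedean v) : Subring K where
  carrier := {y | v y ≤ 1}
  mul_mem' {y z} hy hz := by
    simpa only [Set.mem_ofPred_eq, map_mul] using mul_le_one₀ hy (v.nonneg z) hz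
  one_mem' := by simp
  add_mem' {y z} hy hz := (hna y z).trans (max_le hy hz)
  zero_mem' := by simp
  neg_mem' {y} hy := by simpa only [Set.mem_ofPred_eq, map_neg_eq_map] using hy

variable {v : AbsoluteValue K ℝ}

@[simp]
theorem mem_integer {hna : IsNonarchimedean v} {y : K} : y ∈ v.integer hna ↔ v y ≤ 1 :=
  Iff.rfl

theorem apply_eq_one_of_pow_eq_one (v : AbsoluteValue K ℝ) {ζ : K} {n : ℕ} (hn : n ≠ 0)
    (hζ : ζ ^ n = 1) : v ζ = 1 := by
  rw [← pow_eq_one_iff_of_nonneg (v.nonneg ζ) hn, ← map_pow, hζ, map_one]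

theorem apply_natCast_eq_one_of_not_dvd (hna : IsNonarchimedean v) {p n : ℕ} (hp : p.Prime)
    (hvp : v p < 1) (hn : ¬p ∣ n) : v n = 1 := by
  obtain ⟨a, b, hab⟩ := Nat.isCoprime_iff_coprime.mpr ((hp.coprime_iff_not_dvd).mpr hn)
  have intCast_mul_lt_one (z : ℤ) {w : K} (hw : v w < 1) : v (z * w) < 1 := by
    rw [map_mul]
    exact mul_lt_one_of_nonneg_of_lt_one_right hna.apply_intCast_le_one (v.nonneg w) hw
  refine le_antisymm hna.apply_natCast_le_one (not_lt.mp fun hvn => ?_)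
  have h_one : v ((a * p + b * n : ℤ) : K) < 1 := by
    push_cast
    exact (hna _ _).trans_lt (max_lt (intCast_mul_lt_one a hvp) (intCast_mul_lt_one b hvn))
  simp [hab] at h_one

theorem one_le_apply_one_sub_of_isPrimitiveRoot (hna : IsNonarchimedean v) {ζ : K} {n : ℕ}
    (hζ : IsPrimitiveRoot ζ n) (hn : n ≠ 1) (hvn : v n = 1) : 1 ≤ v (1 - ζ) := by
  obtain _ | _ | m := n
  · simp at hvn
  · exact absurd rfl hn
  have hζ_mem : ζ ∈ v.integer hna :=
    (v.apply_eq_one_of_pow_eq_one (Nat.succ_ne_zero _) hζ.pow_eq_one).le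
  have h_prod := congrArg v (hζ.prod_one_sub_pow_eq_order (n := m + 1))
  rw [prod_range_succ', map_mul, map_prod, pow_one, ← Nat.cast_succ, hvn] at h_prod
  have h_rest : ∏ k ∈ range m, v (1 - ζ ^ (k + 1 + 1)) ≤ 1 :=
    prod_le_one (fun _ _ => v.nonneg _) fun k _ =>
      mem_integer.mp (sub_mem (one_mem _) (pow_mem hζ_mem _))
  calc 1 = (∏ k ∈ range m, v (1 - ζ ^ (k + 1 + 1))) * v (1 - ζ) := h_prod.symm
    _ ≤ 1 * v (1 - ζ) := mul_le_mul_of_nonneg_right h_rest (v.nonneg _)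
    _ = v (1 - ζ) := one_mul _

theorem inv_sub_one_mem_integer (hna : IsNonarchimedean v) {p c : ℕ} (hp : p.Prime)
    (hvp : v p < 1) (hpc : ¬p ∣ c) {ε : K} (hεc : ε ^ c = 1) (hε1 : ε ≠ 1) :
    (ε - 1)⁻¹ ∈ v.integer hna := by
  have h_ord : orderOf ε ∣ c := orderOf_dvd_of_pow_eq_one hεc
  rw [mem_integer, map_inv₀, v.map_sub]
  exact inv_le_one_of_one_le₀ <| one_le_apply_one_sub_of_isPrimitiveRoot hna
    (IsPrimitiveRoot.orderOf ε) (mt orderOf_eq_one_iff.mp hε1)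
    (apply_natCast_eq_one_of_not_dvd hna hp hvp fun h => hpc (h.trans h_ord))

end AbsoluteValue

theorem base_case_coefficients_integral_general {K : Type*} [Field K]
    (v : AbsoluteValue K ℝ) (hna : IsNonarchimedean (⇑v))
    (p c : ℕ) (hp : p.Prime) (hc : 0 < c) (hpc : ¬ p ∣ c)
    (hvp : v (p : K) = (p : ℝ)⁻¹)
    (ε : K) (hεc : ε ^ c = 1) (hε1 : ε ≠ 1) (l : ℕ) :
    ∃ B : ℕ → K → K,
      (∀ h : ℕ, 0 < h →
        ∑ u ∈ Finset.range h, ε⁻¹ ^ u * (u : K) ^ l =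
          ∑ l' ∈ Finset.range (l + 2), ∑ ξ ∈ Polynomial.nthRootsFinset c (1 : K),
            B l' ξ * (h : K) ^ l' * ξ ^ h) ∧
      (∀ l' ξ, B l' ξ ∈ Subring.closure {ε, ε⁻¹, (ε - 1)⁻¹}) ∧
      (∀ l' ξ, v (B l' ξ) ≤ 1) := by
  classical
  set R := Subring.closure {ε, ε⁻¹, (ε - 1)⁻¹}
  set Q := twistedPowerSumPoly ε⁻¹ l
  have hε0 : ε ≠ 0 := by rintro rfl; simp [hc.ne'] at hεc
  have h_inv_mem : (ε⁻¹ - 1)⁻¹ ∈ R := by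
    rw [show (ε⁻¹ - 1)⁻¹ = -(ε * (ε - 1)⁻¹) by field_simp [sub_ne_zero.mpr hε1]; ring]
    exact R.neg_mem <|
      R.mul_mem (Subring.subset_closure (by simp)) (Subring.subset_closure (by simp))
  have hQR : ∀ i, Q.coeff i ∈ R :=
    coeff_twistedPowerSumPoly_mem R (Subring.subset_closure (by simp)) h_inv_mem l
  have hRv : R ≤ v.integer hna := by
    have hvε : v ε = 1 := v.apply_eq_one_of_pow_eq_one hc.ne' hεc
    refine Subring.closure_le.mpr ?_
    rintro y (rfl | rfl | rfl)
    · exact hvε.le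
    · simp [map_inv₀, hvε]
    · exact AbsoluteValue.inv_sub_one_mem_integer hna hp
        (hvp ▸ inv_lt_one_of_one_lt₀ (mod_cast hp.one_lt)) hpc hεc hε1
  refine ⟨Q.expansionCoeff ε⁻¹, fun h _ => ?_, expansionCoeff_mem hQR ε⁻¹,
    fun l' ξ => hRv (expansionCoeff_mem hQR ε⁻¹ l' ξ)⟩
  rw [sum_range_pow_mul_pow_eq (inv_ne_one.mpr hε1)]
  exact eval_mul_pow_sub_eval_zero_eq_sum_expansionCoeff
    ((natDegree_twistedPowerSumPoly_le _ l).trans_lt (by omega))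
    ((mem_nthRootsFinset hc 1).mpr (by rw [inv_pow, hεc, inv_one]))
    ((mem_nthRootsFinset hc 1).mpr (one_pow c)) _ _

/-- Base case `r = 1`, `ε ≠ 1`: the coefficients `B_{l',ξ}` of the expansion
`∑_{u=0}^{h-1} ε^{-u} u^l = ∑_{0 ≤ l' ≤ l+1, ξ ∈ μ_c} B_{l',ξ} h^{l'} ξ^h`
all lie in `ℤ[ε, ε⁻¹, (ε-1)⁻¹]`, hence have `p`-adic valuation `≥ 0`
(absolute value `≤ 1`) for any prime `p ∤ c`. -/
theorem base_case_coefficients_integral {K : Type*} [Field K] [CharZero K]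
    (v : AbsoluteValue K ℝ) (hna : IsNonarchimedean (⇑v))
    (p c : ℕ) (hp : p.Prime) (hc : 0 < c) (hpc : ¬ p ∣ c)
    (hvp : v (p : K) = (p : ℝ)⁻¹)
    (ε : K) (hεc : ε ^ c = 1) (hε1 : ε ≠ 1) (l : ℕ) :
    ∃ B : ℕ → K → K,
      (∀ h : ℕ, 0 < h →
        ∑ u ∈ Finset.range h, ε⁻¹ ^ u * (u : K) ^ l =
          ∑ l' ∈ Finset.range (l + 2), ∑ ξ ∈ Polynomial.nthRootsFinset c (1 : K),
            B l' ξ * (h : K) ^ l' * ξ ^ h) ∧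
      (∀ l' ξ, B l' ξ ∈ Subring.closure {ε, ε⁻¹, (ε - 1)⁻¹}) ∧
      (∀ l' ξ, v (B l' ξ) ≤ 1) :=
  base_case_coefficients_integral_general v hna p c hp hc hpc hvp ε hεc hε1 l
end
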